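/- arXiv:1705.08800 — 2 statements merged into one kernel-verified Lean document; each statement's English description precedes it below -/
import Mathlib

section
/- Let p be a random variable satisfying P(p ≤ α) ≤ α for all α ∈ [0,1] (a valid p-value), and let F(u) = P(p* ≤ u) where p* is a random variable stochastically dominated by p. Then for any α ∈ (0,1), P(F(p) ≤ α) ≤ α. In particular, if F is the c.d.f. of inf_{x∈X} p(x) under the null and p₀ = inf_{x∈J₀} p(x) with J₀ ⊆ X, then P(F(p₀) ≤ α) ≤ α under the null. -/
/-!
Since `F` is monotone, `S = {u | F u ≤ α}` is a lower set, so the event `F(p) ≤ α` is the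
increasing union of the events `p ≤ u` over `u ∈ S`. Continuity from below reduces the claim to
`P(p ≤ u) ≤ P(p* ≤ u) = F(u) ≤ α` for each such `u`.
-/

open MeasureTheory Set

theorem IsLowerSet.measure_preimage_eq_iSup {Ω α : Type*} [MeasurableSpace Ω] [LinearOrder α]
    [TopologicalSpace α] [OrderTopology α] [SecondCountableTopology α]
    (μ : Measure Ω) (f : Ω → α) {S : Set α} (hS : IsLowerSet S) :
    μ (f ⁻¹' S) = ⨆ u : S, μ {ω | f ω ≤ u} := by
  -- gives the subtype `S` its order topology, so that `atTop` on `S` is countably generated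
  have : OrdConnected S := hS.ordConnected
  have hunion : f ⁻¹' S = ⋃ u : S, {ω | f ω ≤ u} := by
    ext ω
    exact ⟨fun h => mem_iUnion.2 ⟨⟨f ω, h⟩, le_rfl⟩,
      fun h => let ⟨u, hu⟩ := mem_iUnion.1 h; hS hu u.2⟩
  rw [hunion]
  exact Monotone.measure_iUnion fun u v huv ω hω => le_trans hω huv

theorem monotone_toReal_measure_le {Ω : Type*} [MeasurableSpace Ω] (μ : Measure Ω)
    [IsFiniteMeasure μ] (f : Ω → ℝ) : Monotone fun u => (μ {ω | f ω ≤ u}).toReal :=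
  fun _ _ huv => measureReal_mono fun _ hω => le_trans hω huv

theorem cdf_of_dominated_pvalue_is_pvalue_general
    {Ω : Type*} [MeasurableSpace Ω] (μ : Measure Ω) [IsProbabilityMeasure μ]
    (p pstar : Ω → ℝ)
    (hdom : ∀ u : ℝ, μ {ω | p ω ≤ u} ≤ μ {ω | pstar ω ≤ u})
    (F : ℝ → ℝ) (hF : ∀ u, F u = (μ {ω | pstar ω ≤ u}).toReal) :
    ∀ α : ℝ, α ∈ Ioo (0:ℝ) 1 → μ {ω | F (p ω) ≤ α} ≤ ENNReal.ofReal α := by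
  intro α _
  have hFmono : Monotone F := by
    simpa only [← funext hF] using monotone_toReal_measure_le μ pstar
  have hS : IsLowerSet {u | F u ≤ α} := (isLowerSet_Iic α).preimage hFmono
  calc μ {ω | F (p ω) ≤ α} = ⨆ u : {u | F u ≤ α}, μ {ω | p ω ≤ u} :=
        hS.measure_preimage_eq_iSup μ p
    _ ≤ ENNReal.ofReal α := iSup_le fun ⟨u, hu⟩ => calc
        μ {ω | p ω ≤ u} ≤ μ {ω | pstar ω ≤ u} := hdom u
        _ = ENNReal.ofReal (F u) := by rw [hF, ENNReal.ofReal_toReal (measure_ne_top μ _)]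
        _ ≤ ENNReal.ofReal α := ENNReal.ofReal_le_ofReal hu

/-- **Plugging a p-value into the c.d.f. of a stochastically smaller variable is again a
p-value.**  Let `p` be a valid p-value (`P(p ≤ α) ≤ α` for all `α ∈ [0,1]`) and let
`F(u) = P(p* ≤ u)` be the c.d.f. of a random variable `p*` stochastically dominated by `p`
(i.e. `P(p ≤ u) ≤ P(p* ≤ u)` for all `u`).  Then for any `α ∈ (0,1)`, `P(F(p) ≤ α) ≤ α`.
(In the application, `F` is the full-null c.d.f. of `inf_{x ∈ X} p(x)` and
`p = inf_{x ∈ J₀} p(x)` with `J₀ ⊆ X`.) -/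
theorem cdf_of_dominated_pvalue_is_pvalue
    {Ω : Type*} [MeasurableSpace Ω] (μ : Measure Ω) [IsProbabilityMeasure μ]
    (p pstar : Ω → ℝ) (hp : Measurable p) (hpstar : Measurable pstar)
    (hvalid : ∀ α : ℝ, α ∈ Icc (0:ℝ) 1 → μ {ω | p ω ≤ α} ≤ ENNReal.ofReal α)
    (hdom : ∀ u : ℝ, μ {ω | p ω ≤ u} ≤ μ {ω | pstar ω ≤ u})
    (F : ℝ → ℝ) (hF : ∀ u, F u = (μ {ω | pstar ω ≤ u}).toReal) :
    ∀ α : ℝ, α ∈ Ioo (0:ℝ) 1 → μ {ω | F (p ω) ≤ α} ≤ ENNReal.ofReal α :=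
  cdf_of_dominated_pvalue_is_pvalue_general μ p pstar hdom F hF
end

section
/- (Romano–Wolf exchangeability lemma) Let (m⁰, m¹, …, m^B) be an exchangeable random vector of real random variables. Then P( (1 + #{b ∈ {1,…,B} : m^b ≤ m⁰})/(B+1) ≤ α ) ≤ α for every α ∈ (0,1). -/
open MeasureTheory ProbabilityTheory Set
open scoped Classical ENNReal

/-- **Romano–Wolf exchangeability lemma.**
Let `(m⁰, m¹, …, m^B)` be an exchangeable vector of real random variables, i.e. the joint law of
`(m^{σ(0)}, …, m^{σ(B)})` is the same for every permutation `σ` of `{0, …, B}`.  Then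
`P((1 + #{b ∈ {1,…,B} : m^b ≤ m⁰})/(B+1) ≤ α) ≤ α` for every `α ∈ (0,1)`. -/
theorem romano_wolf_exchangeable
    {Ω : Type*} [MeasurableSpace Ω] (μ : Measure Ω) [IsProbabilityMeasure μ]
    (B : ℕ) (m : Fin (B + 1) → Ω → ℝ) (hmeas : ∀ b, Measurable (m b))
    (hexch : ∀ σ : Equiv.Perm (Fin (B + 1)),
      Measure.map (fun ω => fun b => m (σ b) ω) μ = Measure.map (fun ω => fun b => m b ω) μ) :
    ∀ α : ℝ, α ∈ Ioo (0:ℝ) 1 →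
      μ {ω | ((1 + ((Finset.univ.filter
            (fun b : Fin (B + 1) => b ≠ 0 ∧ m b ω ≤ m 0 ω)).card : ℝ)) / (B + 1) : ℝ) ≤ α}
        ≤ ENNReal.ofReal α := by
  intro α hα
  have hB : (0:ℝ) < (B:ℝ) + 1 := by positivity
  set k : ℕ := ⌊α * ((B:ℝ) + 1)⌋₊ with hk
  set N : Fin (B+1) → (Fin (B+1) → ℝ) → ℕ :=
    fun i x => (Finset.univ.filter (fun b => x b ≤ x i)).card with hN
  have hNmeas : ∀ i, Measurable (N i) := by
    intro i
    have hEq : N i = fun x => ∑ b : Fin (B+1), if x b ≤ x i then 1 else 0 := by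
      funext x; exact Finset.card_filter _ _
    rw [hEq]
    exact Finset.measurable_sum _ fun b _ =>
      Measurable.ite (measurableSet_le (measurable_pi_apply b) (measurable_pi_apply i))
        measurable_const measurable_const
  set A : Fin (B+1) → Set (Fin (B+1) → ℝ) := fun i => {x | N i x ≤ k} with hA
  have hAmeas : ∀ i, MeasurableSet (A i) :=
    fun i => (hNmeas i) (measurableSet_Iic : MeasurableSet (Set.Iic k))
  set f : Ω → (Fin (B+1) → ℝ) := fun ω b => m b ω with hf
  have hfmeas : Measurable f := measurable_pi_lambda _ hmeas
  set S : Fin (B+1) → Set Ω := fun i => f ⁻¹' A i with hS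
  have hSmeas : ∀ i, MeasurableSet (S i) := fun i => hfmeas (hAmeas i)
  -- each S i has the same measure as S 0
  have hsame : ∀ i, μ (S i) = μ (S 0) := by
    intro i
    set σ : Equiv.Perm (Fin (B+1)) := Equiv.swap 0 i with hσ
    have hg : Measurable (fun ω => fun b => m (σ b) ω) :=
      measurable_pi_lambda _ fun b => hmeas _
    have hpre : (fun ω => fun b => m (σ b) ω) ⁻¹' A 0 = S i := by
      ext ω
      simp only [hS, hA, hN, Set.mem_preimage, Set.mem_setOf_eq, hf]
      have hcard : (Finset.univ.filter
          (fun b => m (σ b) ω ≤ m (σ 0) ω)).card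
          = (Finset.univ.filter (fun b => m b ω ≤ m i ω)).card := by
        have h0 : σ 0 = i := Equiv.swap_apply_left 0 i
        rw [h0]
        refine Finset.card_equiv σ fun b => ?_
        simp
      rw [hcard]
    calc μ (S i) = μ ((fun ω => fun b => m (σ b) ω) ⁻¹' A 0) := by rw [hpre]
      _ = (Measure.map (fun ω => fun b => m (σ b) ω) μ) (A 0) :=
            (Measure.map_apply hg (hAmeas 0)).symm
      _ = (Measure.map f μ) (A 0) := by rw [hexch]
      _ = μ (S 0) := Measure.map_apply hfmeas (hAmeas 0)
  -- combinatorial core: at most k indices can have rank ≤ k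
  have hcomb : ∀ x : Fin (B+1) → ℝ,
      (Finset.univ.filter (fun i => N i x ≤ k)).card ≤ k := by
    intro x
    set T := Finset.univ.filter (fun i : Fin (B+1) => N i x ≤ k) with hT
    rcases T.eq_empty_or_nonempty with h | h
    · simp [h]
    · obtain ⟨j, hjT, hjmax⟩ := T.exists_max_image x h
      have hsub : T ⊆ Finset.univ.filter (fun b => x b ≤ x j) := by
        intro b hb
        simp only [Finset.mem_filter, Finset.mem_univ, true_and]
        exact hjmax b hb
      have h1 : T.card ≤ N j x := Finset.card_le_card hsub
      have hjk : N j x ≤ k := (Finset.mem_filter.mp hjT).2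
      omega
  -- sum of measures bound
  have hsum : ∑ i : Fin (B+1), μ (S i) ≤ (k : ℝ≥0∞) := by
    have h1 : ∑ i : Fin (B+1), μ (S i)
        = ∫⁻ ω, ∑ i : Fin (B+1), (S i).indicator (fun _ => (1:ℝ≥0∞)) ω ∂μ := by
      rw [lintegral_finset_sum]
      · refine Finset.sum_congr rfl fun i _ => ?_
        exact (lintegral_indicator_one (hSmeas i)).symm
      · exact fun i _ => measurable_const.indicator (hSmeas i)
    rw [h1]
    have h2 : ∀ ω, ∑ i : Fin (B+1), (S i).indicator (fun _ => (1:ℝ≥0∞)) ω ≤ (k:ℝ≥0∞) := by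
      intro ω
      have hEq : ∑ i : Fin (B+1), (S i).indicator (fun _ => (1:ℝ≥0∞)) ω
          = ((Finset.univ.filter (fun i => ω ∈ S i)).card : ℝ≥0∞) := by
        rw [Finset.card_filter]
        push_cast
        refine Finset.sum_congr rfl fun i _ => ?_
        by_cases h : ω ∈ S i <;> simp [Set.indicator, h]
      rw [hEq]
      have hmem : ∀ i, ω ∈ S i ↔ N i (f ω) ≤ k := by
        intro i; simp [hS, hA, Set.mem_preimage, Set.mem_setOf_eq]
      have h3 : (Finset.univ.filter (fun i => ω ∈ S i)).card
          = (Finset.univ.filter (fun i => N i (f ω) ≤ k)).card := by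
        congr 1; exact Finset.filter_congr fun i _ => by rw [hmem i]
      rw [h3]
      exact_mod_cast hcomb (f ω)
    calc ∫⁻ ω, ∑ i : Fin (B+1), (S i).indicator (fun _ => (1:ℝ≥0∞)) ω ∂μ
        ≤ ∫⁻ _, (k:ℝ≥0∞) ∂μ := lintegral_mono h2
      _ = (k:ℝ≥0∞) := by simp
  -- the target set is S 0
  have hset : {ω | ((1 + ((Finset.univ.filter
        (fun b : Fin (B + 1) => b ≠ 0 ∧ m b ω ≤ m 0 ω)).card : ℝ)) / (B + 1) : ℝ) ≤ α}
      = S 0 := by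
    ext ω
    simp only [hS, hA, hN, hf, Set.mem_setOf_eq, Set.mem_preimage]
    have hcard : (Finset.univ.filter (fun b : Fin (B+1) => m b ω ≤ m 0 ω)).card
        = 1 + (Finset.univ.filter (fun b : Fin (B+1) => b ≠ 0 ∧ m b ω ≤ m 0 ω)).card := by
      have hins : Finset.univ.filter (fun b : Fin (B+1) => m b ω ≤ m 0 ω)
          = insert (0 : Fin (B+1)) (Finset.univ.filter (fun b => b ≠ 0 ∧ m b ω ≤ m 0 ω)) := by
        ext b
        simp only [Finset.mem_filter, Finset.mem_univ, true_and, Finset.mem_insert]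
        constructor
        · intro hb; by_cases h0 : b = 0
          · exact Or.inl h0
          · exact Or.inr ⟨h0, hb⟩
        · rintro (rfl | ⟨_, hb⟩)
          · exact le_refl _
          · exact hb
      rw [hins, Finset.card_insert_of_notMem (by simp)]
      omega
    rw [hcard]
    rw [div_le_iff₀ hB]
    rw [Nat.le_floor_iff (mul_nonneg hα.1.le hB.le)]
    constructor
    · intro h; exact_mod_cast (by rw [mul_comm] at h ⊢; exact_mod_cast h : ((1 + _ : ℕ) : ℝ) ≤ α * ((B:ℝ)+1))
    · intro h; push_cast at h ⊢; linarith [h]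
  rw [hset]
  have hmul : ((B:ℝ≥0∞) + 1) * μ (S 0) ≤ (k : ℝ≥0∞) := by
    have hc : ∑ i : Fin (B+1), μ (S i) = ((B:ℝ≥0∞) + 1) * μ (S 0) := by
      rw [Finset.sum_congr rfl fun i _ => hsame i, Finset.sum_const, Finset.card_univ,
        Fintype.card_fin, nsmul_eq_mul]
      push_cast
      ring
    rw [← hc]
    exact hsum
  have hkle : (k : ℝ≥0∞) ≤ ((B:ℝ≥0∞) + 1) * ENNReal.ofReal α := by
    have h1 : (k:ℝ) ≤ α * ((B:ℝ) + 1) := Nat.floor_le (mul_nonneg hα.1.le hB.le)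
    calc (k:ℝ≥0∞) = ENNReal.ofReal (k:ℝ) := (ENNReal.ofReal_natCast k).symm
      _ ≤ ENNReal.ofReal (α * ((B:ℝ)+1)) := ENNReal.ofReal_le_ofReal h1
      _ = ENNReal.ofReal α * ENNReal.ofReal ((B:ℝ)+1) := ENNReal.ofReal_mul hα.1.le
      _ = ((B:ℝ≥0∞) + 1) * ENNReal.ofReal α := by
          rw [mul_comm]
          congr 1
          rw [show ((B:ℝ)+1) = (((B+1:ℕ)):ℝ) by push_cast; ring, ENNReal.ofReal_natCast]
          push_cast; ring
  have hfin := hmul.trans hkle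
  exact (ENNReal.mul_le_mul_iff_right (by simp) (by simp)).mp hfin
end
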